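/- arXiv:math/0604506 — 7 statements merged into one kernel-verified Lean document; each statement's English description precedes it below -/
import Mathlib

section
/- Let n be a natural number and for each i ∈ {1,…,n} let δ_i be a δ-metric on a set X_i. On the product set X = X_1 × … × X_n consider the product δ-metric D_∞(x,y) = sup_i δ_i(x_i,y_i) and the tensor δ-metric D_1(x,y) = Σ_i δ_i(x_i,y_i). Then for all x, y in X: sup_i !δ_i(x_i,y_i) ≤ !D_∞(x,y) ≤ !D_1(x,y), moreover !D_1(x,y) = Σ_i !δ_i(x_i,y_i), and Σ_i !δ_i(x_i,y_i) ≤ n · sup_i !δ_i(x_i,y_i). (Hence all four δ-metrics on X are Lipschitz-equivalent.) -/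
open scoped ENNReal

/-- The symmetrised δ-metric `!δ` of a δ-metric `d`:
`!δ(x, y) = inf` over all finite chains `x = x₀, x₁, …, x_p = y` of
`∑_j min (d(x_{j-1}, x_j)) (d(x_j, x_{j-1}))`. -/
noncomputable def symmDelta {X : Type*} (d : X → X → ℝ≥0∞) (x y : X) : ℝ≥0∞ :=
  ⨅ c : {q : ℕ × (ℕ → X) // q.2 0 = x ∧ q.2 q.1 = y},
    ∑ j ∈ Finset.range c.val.1,
      min (d (c.val.2 j) (c.val.2 (j + 1))) (d (c.val.2 (j + 1)) (c.val.2 j))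

lemma symmDelta_le_chain {X : Type*} (d : X → X → ℝ≥0∞) (p : ℕ) (f : ℕ → X) :
    symmDelta d (f 0) (f p) ≤
      ∑ j ∈ Finset.range p, min (d (f j) (f (j + 1))) (d (f (j + 1)) (f j)) :=
  iInf_le _ (⟨(p, f), rfl, rfl⟩ : {q : ℕ × (ℕ → X) // q.2 0 = f 0 ∧ q.2 q.1 = f p})

lemma symmDelta_map {X Y : Type*} (d : X → X → ℝ≥0∞) (d' : Y → Y → ℝ≥0∞) (φ : X → Y)
    (h : ∀ a b, d' (φ a) (φ b) ≤ d a b) (x y : X) :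
    symmDelta d' (φ x) (φ y) ≤ symmDelta d x y := by
  rw [symmDelta]
  refine le_iInf fun c => ?_
  obtain ⟨⟨p, f⟩, h0, hp⟩ := c
  have h0' : f 0 = x := h0
  have hp' : f p = y := hp
  calc symmDelta d' (φ x) (φ y) = symmDelta d' ((fun j => φ (f j)) 0) ((fun j => φ (f j)) p) := by
        simp [h0', hp']
    _ ≤ ∑ j ∈ Finset.range p,
          min (d' (φ (f j)) (φ (f (j + 1)))) (d' (φ (f (j + 1))) (φ (f j))) :=
        symmDelta_le_chain d' p (fun j => φ (f j))
    _ ≤ _ := Finset.sum_le_sum fun j _ => min_le_min (h _ _) (h _ _)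

lemma symmDelta_triangle {X : Type*} (d : X → X → ℝ≥0∞) (x y z : X) :
    symmDelta d x z ≤ symmDelta d x y + symmDelta d y z := by
  conv_rhs => rw [symmDelta, symmDelta, ENNReal.iInf_add]
  refine le_iInf fun c => ?_
  conv_rhs => rw [ENNReal.add_iInf]
  refine le_iInf fun c' => ?_
  obtain ⟨⟨p, f⟩, h0, hp⟩ := c
  obtain ⟨⟨q, g⟩, h0', hq⟩ := c'
  have hfx : f 0 = x := h0
  have hfy : f p = y := hp
  have hgy : g 0 = y := h0'
  have hgz : g q = z := hq
  set h : ℕ → X := fun j => if j < p then f j else g (j - p) with hdef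
  have hf : ∀ j ≤ p, h j = f j := by
    intro j hj
    by_cases hjp : j < p
    · simp [hdef, hjp]
    · have : j = p := le_antisymm hj (not_lt.mp hjp)
      subst this
      simp [hdef, hgy, hfy]
  have hg : ∀ j, h (p + j) = g j := by
    intro j
    have : ¬ (p + j < p) := by omega
    simp [hdef, this]
  have h0'' : h 0 = x := by rw [hf 0 (Nat.zero_le _), hfx]
  have hend : h (p + q) = z := by rw [hg q, hgz]
  calc symmDelta d x z = symmDelta d (h 0) (h (p + q)) := by rw [h0'', hend]
    _ ≤ ∑ j ∈ Finset.range (p + q), min (d (h j) (h (j + 1))) (d (h (j + 1)) (h j)) :=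
        symmDelta_le_chain d (p + q) h
    _ = (∑ j ∈ Finset.range p, min (d (f j) (f (j + 1))) (d (f (j + 1)) (f j))) +
        ∑ j ∈ Finset.range q, min (d (g j) (g (j + 1))) (d (g (j + 1)) (g j)) := by
        rw [Finset.sum_range_add]
        congr 1
        · refine Finset.sum_congr rfl fun j hj => ?_
          rw [Finset.mem_range] at hj
          rw [hf j hj.le, hf (j + 1) hj]
        · refine Finset.sum_congr rfl fun j hj => ?_
          have := hg j
          have h2 := hg (j + 1)
          rw [← Nat.add_assoc] at h2
          rw [this, h2]

lemma symmDelta_telescope {X : Type*} (d : X → X → ℝ≥0∞) (g : ℕ → X) (p : ℕ) :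
    symmDelta d (g 0) (g p) ≤ ∑ j ∈ Finset.range p, symmDelta d (g j) (g (j + 1)) := by
  induction p with
  | zero => simpa using symmDelta_le_chain d 0 g
  | succ p ih =>
      rw [Finset.sum_range_succ]
      exact (symmDelta_triangle d (g 0) (g p) (g (p + 1))).trans (add_le_add_left ih _)

lemma symmDelta_coord {n : ℕ} {X : Fin n → Type*} (d : ∀ i, X i → X i → ℝ≥0∞)
    (href : ∀ i (x : X i), d i x x = 0) (i : Fin n) (u v : ∀ i, X i)
    (huv : ∀ j, j ≠ i → u j = v j) :
    symmDelta (fun a b : ∀ i, X i => ∑ k, d k (a k) (b k)) u v ≤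
      symmDelta (d i) (u i) (v i) := by
  have h1 : Function.update u i (u i) = u := Function.update_eq_self i u
  have h2 : Function.update u i (v i) = v := by
    funext j
    by_cases hj : j = i
    · subst hj; simp
    · rw [Function.update_of_ne hj, huv j hj]
  have key : ∀ a b : X i,
      (∑ k, d k (Function.update u i a k) (Function.update u i b k)) ≤ d i a b := by
    intro a b
    rw [Finset.sum_eq_single i]
    · simp
    · intro k _ hk
      rw [Function.update_of_ne hk, Function.update_of_ne hk, href]
    · intro hi; exact absurd (Finset.mem_univ i) hi
  have := symmDelta_map (d i) (fun a b : ∀ i, X i => ∑ k, d k (a k) (b k))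
    (fun a => Function.update u i a) (fun a b => key a b) (u i) (v i)
  rwa [h1, h2] at this

/-- Given δ-metrics `d i` on sets `X i` (`i ∈ Fin n`), consider on the product the
product δ-metric `D∞(x,y) = sup_i d i (x i) (y i)` and the tensor δ-metric
`D₁(x,y) = ∑ i, d i (x i) (y i)`.  Then
`sup_i !(d i)(x i, y i) ≤ !D∞(x,y) ≤ !D₁(x,y)`, moreover `!D₁(x,y) = ∑ i, !(d i)(x i, y i)`,
and `∑ i, !(d i)(x i, y i) ≤ n · sup_i !(d i)(x i, y i)`; hence all four δ-metrics are
Lipschitz-equivalent. -/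
theorem symm_prod_tensor (n : ℕ) (X : Fin n → Type*) (d : ∀ i, X i → X i → ℝ≥0∞)
    (href : ∀ i (x : X i), d i x x = 0)
    (htri : ∀ i (x y z : X i), d i x z ≤ d i x y + d i y z)
    (x y : ∀ i, X i) :
    (⨆ i, symmDelta (d i) (x i) (y i)) ≤
        symmDelta (fun u v : ∀ i, X i => ⨆ i, d i (u i) (v i)) x y ∧
    symmDelta (fun u v : ∀ i, X i => ⨆ i, d i (u i) (v i)) x y ≤
        symmDelta (fun u v : ∀ i, X i => ∑ i, d i (u i) (v i)) x y ∧
    symmDelta (fun u v : ∀ i, X i => ∑ i, d i (u i) (v i)) x y =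
        ∑ i, symmDelta (d i) (x i) (y i) ∧
    ∑ i, symmDelta (d i) (x i) (y i) ≤ (n : ℝ≥0∞) * ⨆ i, symmDelta (d i) (x i) (y i) := by
  refine ⟨?_, ?_, ?_, ?_⟩
  · exact iSup_le fun i =>
      symmDelta_map (fun u v : ∀ i, X i => ⨆ i, d i (u i) (v i)) (d i)
        (fun u => u i) (fun a b => le_iSup (fun k => d k (a k) (b k)) i) x y
  · exact symmDelta_map _ _ id
      (fun a b => iSup_le fun i =>
        Finset.single_le_sum (f := fun k => d k (a k) (b k))
          (fun _ _ => zero_le) (Finset.mem_univ i)) x y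
  · refine le_antisymm ?_ ?_
    · -- telescope over coordinates
      set z : ℕ → ∀ i, X i := fun k i => if (i : ℕ) < k then y i else x i with hz
      have hz0 : z 0 = x := by funext i; simp [hz]
      have hzn : z n = y := by funext i; simp [hz, i.isLt]
      calc symmDelta (fun u v : ∀ i, X i => ∑ i, d i (u i) (v i)) x y
          = symmDelta (fun u v : ∀ i, X i => ∑ i, d i (u i) (v i)) (z 0) (z n) := by
            rw [hz0, hzn]
        _ ≤ ∑ k ∈ Finset.range n,
              symmDelta (fun u v : ∀ i, X i => ∑ i, d i (u i) (v i)) (z k) (z (k + 1)) :=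
            symmDelta_telescope _ z n
        _ = ∑ i : Fin n,
              symmDelta (fun u v : ∀ i, X i => ∑ i, d i (u i) (v i)) (z i) (z (i + 1)) :=
            (Finset.sum_range fun k =>
              symmDelta (fun u v : ∀ i, X i => ∑ i, d i (u i) (v i)) (z k) (z (k + 1)))
        _ ≤ ∑ i, symmDelta (d i) (x i) (y i) := by
            refine Finset.sum_le_sum fun i _ => ?_
            have hxi : z (i : ℕ) i = x i := by simp [hz]
            have hyi : z ((i : ℕ) + 1) i = y i := by simp [hz]
            have := symmDelta_coord d href i (z (i : ℕ)) (z ((i : ℕ) + 1))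
              (fun j hj => by
                have : (j : ℕ) ≠ (i : ℕ) := fun h => hj (Fin.ext h)
                simp only [hz]
                by_cases hlt : (j : ℕ) < (i : ℕ)
                · have : (j : ℕ) < (i : ℕ) + 1 := by omega
                  simp [hlt, this]
                · have : ¬ (j : ℕ) < (i : ℕ) + 1 := by omega
                  simp [hlt, this])
            rwa [hxi, hyi] at this
    · rw [symmDelta]
      refine le_iInf fun c => ?_
      obtain ⟨⟨p, f⟩, h0, hp⟩ := c
      calc ∑ i, symmDelta (d i) (x i) (y i)
          ≤ ∑ i, ∑ j ∈ Finset.range p,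
              min (d i (f j i) (f (j + 1) i)) (d i (f (j + 1) i) (f j i)) := by
            refine Finset.sum_le_sum fun i _ => ?_
            have := symmDelta_le_chain (d i) p (fun j => f j i)
            simp only [← h0, ← hp]
            exact this
        _ = ∑ j ∈ Finset.range p, ∑ i,
              min (d i (f j i) (f (j + 1) i)) (d i (f (j + 1) i) (f j i)) :=
            Finset.sum_comm
        _ ≤ _ := by
            refine Finset.sum_le_sum fun j _ => le_min ?_ ?_
            · exact Finset.sum_le_sum fun i _ => min_le_left _ _
            · exact Finset.sum_le_sum fun i _ => min_le_right _ _
  · calc ∑ i, symmDelta (d i) (x i) (y i)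
        ≤ ∑ _i : Fin n, ⨆ j, symmDelta (d j) (x j) (y j) :=
          Finset.sum_le_sum fun i _ => le_iSup (fun j => symmDelta (d j) (x j) (y j)) i
      _ = (n : ℝ≥0∞) * ⨆ i, symmDelta (d i) (x i) (y i) := by
          rw [Finset.sum_const, Finset.card_univ, Fintype.card_fin, nsmul_eq_mul]
end

section
/- Let X be a set with a δ-metric δ. The length L is the least functional on set-theoretic paths in X which is strictly additive for concatenation, invariant under increasing reparametrisation, and dominates the span. Precisely: if M assigns to every map a : [0,1] → X a value M(a) ∈ [0,∞] such that (i) M(a + b) = M(a) + M(b) for all concatenations (where (a+b)(t) = a(2t) for t ≤ 1/2 and b(2t−1) for t ≥ 1/2, with a(1) = b(0)), (ii) M(a ∘ ρ) = M(a) for every strictly increasing bijection ρ of [0,1] onto itself, and (iii) M(a) ≥ sp(a) for all a, then M(a) ≥ L(a) for all maps a : [0,1] → X. -/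
open scoped ENNReal

/-- The span of a set-theoretic path `a : [0,1] → X` with respect to a δ-metric `d`. -/
noncomputable def sp {X : Type*} (d : X → X → ℝ≥0∞) (a : unitInterval → X) : ℝ≥0∞ :=
  ⨆ p : {q : unitInterval × unitInterval // q.1 < q.2}, d (a p.val.1) (a p.val.2)

/-- The length of a set-theoretic path `a : [0,1] → X` with respect to a δ-metric `d`. -/
noncomputable def pathLen {X : Type*} (d : X → X → ℝ≥0∞) (a : unitInterval → X) : ℝ≥0∞ :=
  ⨆ P : {q : ℕ × (ℕ → unitInterval) //
      q.2 0 = 0 ∧ q.2 q.1 = 1 ∧ ∀ i < q.1, q.2 i < q.2 (i + 1)},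
    ∑ i ∈ Finset.range P.val.1, d (a (P.val.2 i)) (a (P.val.2 (i + 1)))

/-- Concatenation of paths: `(a + b)(t) = a(2t)` for `t ≤ 1/2`, `b(2t - 1)` for `t ≥ 1/2`. -/
noncomputable def concat {X : Type*} (a b : unitInterval → X) : unitInterval → X := fun t =>
  if h : (t : ℝ) ≤ 1 / 2 then
    a ⟨2 * (t : ℝ), Set.mem_Icc.mpr ⟨by have := t.2.1; linarith, by linarith⟩⟩
  else
    b ⟨2 * (t : ℝ) - 1, Set.mem_Icc.mpr ⟨by push_neg at h; linarith, by have := t.2.2; linarith⟩⟩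

private lemma sp_pair {X : Type*} (d : X → X → ℝ≥0∞) (a : unitInterval → X)
    {x y : unitInterval} (h : x < y) : d (a x) (a y) ≤ sp d a :=
  le_iSup (fun p : {q : unitInterval × unitInterval // q.1 < q.2} =>
    d (a p.val.1) (a p.val.2)) ⟨(x, y), h⟩

/-- The length `L` is the least functional on set-theoretic paths which is strictly
additive for concatenation, invariant under strictly increasing reparametrisation, and
dominates the span: any such `M` satisfies `M(a) ≥ L(a)` for all paths `a`. -/
theorem length_minimal {X : Type*} (d : X → X → ℝ≥0∞)
    (href : ∀ x, d x x = 0) (htri : ∀ x y z, d x z ≤ d x y + d y z)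
    (M : (unitInterval → X) → ℝ≥0∞)
    (hadd : ∀ a b : unitInterval → X, a 1 = b 0 → M (concat a b) = M a + M b)
    (hrep : ∀ (a : unitInterval → X) (ρ : unitInterval → unitInterval),
      StrictMono ρ → Function.Bijective ρ → M (a ∘ ρ) = M a)
    (hsp : ∀ a : unitInterval → X, sp d a ≤ M a) :
    ∀ a : unitInterval → X, pathLen d a ≤ M a := by
  have h01 : (0 : unitInterval) < 1 := by
    rw [← Subtype.coe_lt_coe]; norm_num
  have key : ∀ (p : ℕ) (a : unitInterval → X) (t : ℕ → unitInterval),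
      t 0 = 0 → t p = 1 → (∀ i < p, t i < t (i + 1)) →
      ∑ i ∈ Finset.range p, d (a (t i)) (a (t (i + 1))) ≤ M a := by
    intro p
    induction p with
    | zero =>
      intro a t h0 h1 _
      exfalso
      rw [h0] at h1
      have := congrArg Subtype.val h1
      norm_num at this
    | succ n ih =>
      intro a t h0 h1 hm
      rcases Nat.eq_zero_or_pos n with hn | hn
      · subst hn
        rw [Finset.sum_range_one, h0, h1]
        exact le_trans (sp_pair d a h01) (hsp a)
      · -- p = n + 1 ≥ 2
        set c : ℝ := (t 1 : ℝ) with hcdef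
        have hc0 : 0 < c := by
          have h := hm 0 (by omega)
          rw [h0] at h
          have := Subtype.coe_lt_coe.mpr h
          exact this
        have hc1 : c < 1 := by
          have h12 := Subtype.coe_lt_coe.mpr (hm 1 (by omega))
          have h2 : ((t 2 : unitInterval) : ℝ) ≤ 1 := (t 2).2.2
          linarith
        -- the two affine pieces
        have mem1 : ∀ s : unitInterval, c * (s : ℝ) ∈ Set.Icc (0 : ℝ) 1 := by
          intro s
          constructor
          · exact mul_nonneg hc0.le s.2.1
          · nlinarith [s.2.1, s.2.2]
        have mem2 : ∀ s : unitInterval, c + (1 - c) * (s : ℝ) ∈ Set.Icc (0 : ℝ) 1 := by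
          intro s
          constructor
          · nlinarith [s.2.1]
          · nlinarith [s.2.2]
        set f₁ : unitInterval → unitInterval := fun s => ⟨c * (s : ℝ), mem1 s⟩ with hf₁
        set f₂ : unitInterval → unitInterval := fun s => ⟨c + (1 - c) * (s : ℝ), mem2 s⟩ with hf₂
        set ρ : unitInterval → unitInterval := concat f₁ f₂ with hρ
        have hρval : ∀ s : unitInterval,
            (ρ s : ℝ) = if (s : ℝ) ≤ 1 / 2 then c * (2 * (s : ℝ))
              else c + (1 - c) * (2 * (s : ℝ) - 1) := by
          intro s
          rw [hρ]
          unfold concat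
          by_cases h : (s : ℝ) ≤ 1 / 2
          · rw [dif_pos h, if_pos h]
          · rw [dif_neg h, if_neg h]
        have hmono : StrictMono ρ := by
          intro s s' hss
          rw [← Subtype.coe_lt_coe] at hss ⊢
          rw [hρval s, hρval s']
          by_cases h1 : (s : ℝ) ≤ 1 / 2 <;> by_cases h2 : (s' : ℝ) ≤ 1 / 2
          · rw [if_pos h1, if_pos h2]; nlinarith
          · rw [if_pos h1, if_neg h2]; push_neg at h2; nlinarith
          · exfalso; push_neg at h1; linarith
          · rw [if_neg h1, if_neg h2]; push_neg at h1 h2; nlinarith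
        have hsurj : Function.Surjective ρ := by
          intro u
          by_cases hu : (u : ℝ) ≤ c
          · have hs01 : (u : ℝ) / (2 * c) ∈ Set.Icc (0 : ℝ) 1 := by
              constructor
              · exact div_nonneg u.2.1 (by linarith)
              · rw [div_le_one (by linarith)]; linarith [u.2.2]
            refine ⟨⟨(u : ℝ) / (2 * c), hs01⟩, ?_⟩
            apply Subtype.ext
            rw [hρval]
            have hle : ((⟨(u : ℝ) / (2 * c), hs01⟩ : unitInterval) : ℝ) ≤ 1 / 2 := by
              show (u : ℝ) / (2 * c) ≤ 1 / 2
              rw [div_le_div_iff₀ (by linarith) (by norm_num)]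
              linarith
            rw [if_pos hle]
            show c * (2 * ((u : ℝ) / (2 * c))) = (u : ℝ)
            field_simp
          · push_neg at hu
            have he0 : 0 < ((u : ℝ) - c) / (1 - c) := div_pos (by linarith) (by linarith)
            have he1 : ((u : ℝ) - c) / (1 - c) ≤ 1 := by
              rw [div_le_one (by linarith)]; linarith [u.2.2]
            have hs01 : (1 + ((u : ℝ) - c) / (1 - c)) / 2 ∈ Set.Icc (0 : ℝ) 1 := by
              constructor <;> [linarith; linarith]
            refine ⟨⟨(1 + ((u : ℝ) - c) / (1 - c)) / 2, hs01⟩, ?_⟩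
            apply Subtype.ext
            rw [hρval]
            have hgt : ¬ (((⟨(1 + ((u : ℝ) - c) / (1 - c)) / 2, hs01⟩ : unitInterval) : ℝ) ≤ 1 / 2) := by
              show ¬ ((1 + ((u : ℝ) - c) / (1 - c)) / 2 ≤ 1 / 2)
              push_neg; linarith
            rw [if_neg hgt]
            have hne : (1 : ℝ) - c ≠ 0 := by linarith
            show c + (1 - c) * (2 * ((1 + ((u : ℝ) - c) / (1 - c)) / 2) - 1) = (u : ℝ)
            field_simp [hne]
            ring
        have hcomp : a ∘ ρ = concat (a ∘ f₁) (a ∘ f₂) := by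
          funext s
          rw [hρ]
          unfold concat
          simp only [Function.comp]
          by_cases h : (s : ℝ) ≤ 1 / 2
          · rw [dif_pos h, dif_pos h]
          · rw [dif_neg h, dif_neg h]
        have hend : (a ∘ f₁) 1 = (a ∘ f₂) 0 := by
          simp only [Function.comp]
          congr 1
          apply Subtype.ext
          show c * ((1 : unitInterval) : ℝ) = c + (1 - c) * ((0 : unitInterval) : ℝ)
          norm_num
        have hMsplit : M a = M (a ∘ f₁) + M (a ∘ f₂) := by
          rw [← hrep a ρ hmono ⟨hmono.injective, hsurj⟩, hcomp, hadd _ _ hend]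
        -- monotonicity of t on relevant range
        have htm : ∀ i ≤ n, c ≤ (t (i + 1) : ℝ) := by
          intro i hi
          induction i with
          | zero => simp [hcdef]
          | succ k ihk =>
            have h1 := ihk (by omega)
            have h2 := Subtype.coe_lt_coe.mpr (hm (k + 1) (by omega))
            linarith
        -- partition for the second piece
        have hv01 : ∀ i, min 1 (max 0 (((t (i + 1) : ℝ) - c) / (1 - c))) ∈ Set.Icc (0 : ℝ) 1 :=
          fun i => ⟨le_min zero_le_one (le_max_left 0 _), min_le_left _ _⟩
        set u : ℕ → unitInterval :=
          fun i => ⟨min 1 (max 0 (((t (i + 1) : ℝ) - c) / (1 - c))), hv01 i⟩ with hu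
        have huval : ∀ i ≤ n, (u i : ℝ) = ((t (i + 1) : ℝ) - c) / (1 - c) := by
          intro i hi
          have h1 := htm i hi
          have h2 : (t (i + 1) : ℝ) ≤ 1 := (t (i + 1)).2.2
          show min 1 (max 0 _) = _
          rw [max_eq_right (div_nonneg (by linarith) (by linarith)),
            min_eq_right (by rw [div_le_one (by linarith)]; linarith)]
        have hu0 : u 0 = 0 := by
          apply Subtype.ext
          rw [huval 0 (by omega)]
          simp [hcdef]
        have hun : u n = 1 := by
          apply Subtype.ext
          rw [huval n le_rfl, h1]
          show (1 - c) / (1 - c) = ((1 : unitInterval) : ℝ)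
          rw [div_self (by linarith)]
          norm_num
        have hum : ∀ i < n, u i < u (i + 1) := by
          intro i hi
          rw [← Subtype.coe_lt_coe, huval i (by omega), huval (i + 1) (by omega)]
          have hlt := Subtype.coe_lt_coe.mpr (hm (i + 1) (by omega))
          rw [div_lt_div_iff_of_pos_right (by linarith)]
          linarith
        have hval2 : ∀ i ≤ n, (a ∘ f₂) (u i) = a (t (i + 1)) := by
          intro i hi
          simp only [Function.comp]
          congr 1
          apply Subtype.ext
          show c + (1 - c) * (u i : ℝ) = (t (i + 1) : ℝ)
          have hne : (1 : ℝ) - c ≠ 0 := by linarith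
          rw [huval i hi]
          field_simp [hne]
          ring
        have hsum2 : ∑ i ∈ Finset.range n, d (a (t (i + 1))) (a (t (i + 2))) ≤ M (a ∘ f₂) := by
          calc ∑ i ∈ Finset.range n, d (a (t (i + 1))) (a (t (i + 2)))
              = ∑ i ∈ Finset.range n, d ((a ∘ f₂) (u i)) ((a ∘ f₂) (u (i + 1))) := by
                apply Finset.sum_congr rfl
                intro i hi
                rw [Finset.mem_range] at hi
                rw [hval2 i (by omega), hval2 (i + 1) (by omega)]
            _ ≤ M (a ∘ f₂) := ih (a ∘ f₂) u hu0 hun hum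
        have hfirst : d (a (t 0)) (a (t 1)) ≤ M (a ∘ f₁) := by
          have e0 : (a ∘ f₁) 0 = a (t 0) := by
            simp only [Function.comp]
            congr 1
            apply Subtype.ext
            rw [h0]
            show c * ((0 : unitInterval) : ℝ) = ((0 : unitInterval) : ℝ)
            norm_num
          have e1 : (a ∘ f₁) 1 = a (t 1) := by
            simp only [Function.comp]
            congr 1
            apply Subtype.ext
            show c * ((1 : unitInterval) : ℝ) = (t 1 : ℝ)
            norm_num [hcdef]
          calc d (a (t 0)) (a (t 1)) = d ((a ∘ f₁) 0) ((a ∘ f₁) 1) := by rw [e0, e1]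
            _ ≤ sp d (a ∘ f₁) := sp_pair d _ h01
            _ ≤ M (a ∘ f₁) := hsp _
        calc ∑ i ∈ Finset.range (n + 1), d (a (t i)) (a (t (i + 1)))
            = (∑ i ∈ Finset.range n, d (a (t (i + 1))) (a (t (i + 2)))) +
              d (a (t 0)) (a (t 1)) := Finset.sum_range_succ' _ n
          _ ≤ M (a ∘ f₂) + M (a ∘ f₁) := add_le_add hsum2 hfirst
          _ = M a := by rw [hMsplit, add_comm]
  intro a
  apply iSup_le
  rintro ⟨⟨p, t⟩, h0, h1, hm⟩
  exact key p a t h0 h1 hm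
end

section
/- Equip ℝ^n with the tensor δ-metric δ(x,y) = Σ_{i=1}^n (y_i − x_i) if x_i ≤ y_i for all i, and δ(x,y) = ∞ otherwise. Then for any map a : [0,1] → ℝ^n: if every component a_i is weakly increasing, then L(a) = sp(a) = Σ_{i=1}^n (a_i(1) − a_i(0)); otherwise L(a) = ∞. -/
open scoped ENNReal

open Classical in
/-- The tensor δ-metric on `ℝ^n`: `δ(x,y) = ∑ i, (y i − x i)` when `x i ≤ y i` for all `i`,
and `∞` otherwise. -/
noncomputable def dTensor (n : ℕ) : (Fin n → ℝ) → (Fin n → ℝ) → ℝ≥0∞ := fun x y =>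
  if ∀ i, x i ≤ y i then ENNReal.ofReal (∑ i, (y i - x i)) else ⊤

lemma uI_zero_lt_one : (0 : unitInterval) < 1 := by
  rw [← Subtype.coe_lt_coe]; norm_num

/-- Any single distance `d (a s) (a t)` with `s < t` is a lower bound for the length. -/
lemma le_pathLen_of_lt {X : Type*} (d : X → X → ℝ≥0∞) (a : unitInterval → X)
    (s t : unitInterval) (hst : s < t) : d (a s) (a t) ≤ pathLen d a := by
  rcases eq_or_lt_of_le (unitInterval.nonneg' : 0 ≤ s) with hs | hs <;>
  rcases eq_or_lt_of_le (unitInterval.le_one' : t ≤ 1) with ht | ht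
  · -- s = 0, t = 1
    subst ht
    refine le_trans ?_ (le_iSup _ (⟨(1, fun i => if i = 0 then 0 else 1),
      by simp, by simp, ?_⟩ :
      {q : ℕ × (ℕ → unitInterval) //
        q.2 0 = 0 ∧ q.2 q.1 = 1 ∧ ∀ i < q.1, q.2 i < q.2 (i + 1)}))
    · simp [← hs]
    · intro i hi
      interval_cases i
      simp only [if_pos rfl, if_neg one_ne_zero]
      exact uI_zero_lt_one
  · -- s = 0, t < 1
    refine le_trans ?_ (le_iSup _ (⟨(2, fun i => if i = 0 then 0 else if i = 1 then t else 1),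
      by simp, by simp, ?_⟩ :
      {q : ℕ × (ℕ → unitInterval) //
        q.2 0 = 0 ∧ q.2 q.1 = 1 ∧ ∀ i < q.1, q.2 i < q.2 (i + 1)}))
    · rw [Finset.sum_range_succ, Finset.sum_range_one]
      simp only [if_pos rfl, if_neg one_ne_zero]
      norm_num [← hs]
    · intro i hi
      interval_cases i
      · norm_num
        rw [hs]; exact hst
      · norm_num
        exact ht
  · -- 0 < s, t = 1
    subst ht
    refine le_trans ?_ (le_iSup _ (⟨(2, fun i => if i = 0 then 0 else if i = 1 then s else 1),
      by simp, by simp, ?_⟩ :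
      {q : ℕ × (ℕ → unitInterval) //
        q.2 0 = 0 ∧ q.2 q.1 = 1 ∧ ∀ i < q.1, q.2 i < q.2 (i + 1)}))
    · rw [Finset.sum_range_succ, Finset.sum_range_one]
      norm_num
    · intro i hi
      interval_cases i
      · simpa using hs
      · norm_num
        exact hst
  · -- 0 < s, t < 1
    refine le_trans ?_ (le_iSup _
      (⟨(3, fun i => if i = 0 then 0 else if i = 1 then s else if i = 2 then t else 1),
      by simp, by simp, ?_⟩ :
      {q : ℕ × (ℕ → unitInterval) //
        q.2 0 = 0 ∧ q.2 q.1 = 1 ∧ ∀ i < q.1, q.2 i < q.2 (i + 1)}))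
    · rw [Finset.sum_range_succ, Finset.sum_range_succ, Finset.sum_range_one]
      norm_num
      calc d (a s) (a t) ≤ d (a 0) (a s) + d (a s) (a t) := le_add_self
        _ ≤ d (a 0) (a s) + d (a s) (a t) + d (a t) (a 1) := le_self_add
    · intro i hi
      interval_cases i
      · simpa using hs
      · norm_num; exact hst
      · norm_num; exact ht

/-- For the tensor δ-metric on `ℝ^n` and any map `a : [0,1] → ℝ^n`: if every component
of `a` is weakly increasing then `L(a) = sp(a) = ∑ i, (a 1 i − a 0 i)`; otherwise
`L(a) = ∞`. -/
theorem length_span_tensor_Rn (n : ℕ) (a : unitInterval → (Fin n → ℝ)) :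
    ((∀ i, Monotone fun t => a t i) →
      pathLen (dTensor n) a = sp (dTensor n) a ∧
      sp (dTensor n) a = ENNReal.ofReal (∑ i, (a 1 i - a 0 i))) ∧
    ((¬ ∀ i, Monotone fun t => a t i) → pathLen (dTensor n) a = ⊤) := by
  constructor
  · intro hmono
    have hd : ∀ s t : unitInterval, s ≤ t →
        dTensor n (a s) (a t) = ENNReal.ofReal (∑ i, (a t i - a s i)) := by
      intro s t hst
      rw [dTensor, if_pos (fun i => hmono i hst)]
    have hsp : sp (dTensor n) a = ENNReal.ofReal (∑ i, (a 1 i - a 0 i)) := by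
      apply le_antisymm
      · apply iSup_le
        rintro ⟨⟨s, t⟩, hst⟩
        rw [hd s t hst.le]
        apply ENNReal.ofReal_le_ofReal
        apply Finset.sum_le_sum
        intro i _
        have h1 := hmono i (unitInterval.le_one' : t ≤ 1)
        have h2 := hmono i (unitInterval.nonneg' : 0 ≤ s)
        simp only at h1 h2
        linarith
      · have := le_iSup (fun p : {q : unitInterval × unitInterval // q.1 < q.2} =>
          dTensor n (a p.val.1) (a p.val.2)) ⟨(0, 1), uI_zero_lt_one⟩
        rw [hd 0 1 uI_zero_lt_one.le] at this
        exact this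
    refine ⟨?_, hsp⟩
    rw [hsp]
    apply le_antisymm
    · apply iSup_le
      rintro ⟨⟨p, f⟩, hf0, hfp, hflt⟩
      simp only at hf0 hfp hflt
      have hle : ∀ i < p, f i ≤ f (i + 1) := fun i hi => (hflt i hi).le
      calc ∑ i ∈ Finset.range p, dTensor n (a (f i)) (a (f (i + 1)))
          = ∑ i ∈ Finset.range p, ENNReal.ofReal (∑ j, (a (f (i + 1)) j - a (f i) j)) := by
            apply Finset.sum_congr rfl
            intro i hi
            exact hd _ _ (hle i (Finset.mem_range.mp hi))
        _ = ENNReal.ofReal (∑ i ∈ Finset.range p, ∑ j, (a (f (i + 1)) j - a (f i) j)) := by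
            rw [ENNReal.ofReal_sum_of_nonneg]
            intro i hi
            apply Finset.sum_nonneg
            intro j _
            have := hmono j (hle i (Finset.mem_range.mp hi))
            simp only at this
            linarith
        _ = ENNReal.ofReal (∑ j, (a 1 j - a 0 j)) := by
            congr 1
            rw [Finset.sum_comm]
            have : ∀ j : Fin n, ∑ i ∈ Finset.range p, (a (f (i + 1)) j - a (f i) j)
                = a 1 j - a 0 j := by
              intro j
              rw [Finset.sum_range_sub (fun i => a (f i) j) p, hf0, hfp]
            exact Finset.sum_congr rfl fun j _ => this j
        _ ≤ ENNReal.ofReal (∑ i, (a 1 i - a 0 i)) := le_rfl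
    · have := le_pathLen_of_lt (dTensor n) a 0 1 uI_zero_lt_one
      rwa [hd 0 1 uI_zero_lt_one.le] at this
  · intro hnm
    push_neg at hnm
    obtain ⟨i, hi⟩ := hnm
    rw [Monotone] at hi
    push_neg at hi
    obtain ⟨s, t, hst, hlt⟩ := hi
    have hne : s < t := lt_of_le_of_ne hst (by rintro rfl; exact absurd hlt (lt_irrefl _))
    have hd : dTensor n (a s) (a t) = ⊤ := by
      rw [dTensor, if_neg]
      push_neg
      exact ⟨i, hlt⟩
    have := le_pathLen_of_lt (dTensor n) a s t hne
    rw [hd] at this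
    exact top_unique this
end

section
/- Let X, Y, Z be small categories each equipped with a weight function w on morphisms with values in [0,∞] satisfying w(identity) = 0 and w(composite of f then g) ≤ w(f) + w(g). Let F : X × Y ⥤ Z be a functor (on the product category). Then F satisfies w(F(a,b)) ≤ w(a) + w(b) for every morphism (a,b) of X × Y if and only if both of the following hold: (i) for every object x of X and every morphism b of Y, w(F(1_x, b)) ≤ w(b); and (ii) for every morphism a : x → x' of X, sup over objects y of Y of w(F(a, 1_y)) is ≤ w(a). (This establishes the bijection underlying the monoidal closed structure of the category of additively weighted categories, where the tensor product X ⊗ Y carries the weight w(a,b) = w(a) + w(b) and the internal hom Z^Y carries the weight W(φ) = sup_y w(φ(y)) on natural transformations.) -/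
open scoped ENNReal
open CategoryTheory

/-- For additively weighted categories `X`, `Y`, `Z` and a functor `F : X × Y ⥤ Z`,
`F` is 1-Lipschitz for the tensor weight `w(a,b) = w(a) + w(b)` on `X × Y` if and only if:
(i) `w(F(1_x, b)) ≤ w(b)` for every object `x` of `X` and morphism `b` of `Y`, and
(ii) `sup_y w(F(a, 1_y)) ≤ w(a)` for every morphism `a` of `X`.  This is the bijection
underlying the monoidal closed structure of weighted categories, where the internal hom
`Z^Y` carries the weight `W(φ) = sup_y w(φ(y))` on natural transformations. -/
theorem weighted_tensor_hom_adjunction {X Y Z : Type*} [Category X] [Category Y] [Category Z]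
    (wX : ∀ {x x' : X}, (x ⟶ x') → ℝ≥0∞)
    (wY : ∀ {y y' : Y}, (y ⟶ y') → ℝ≥0∞)
    (wZ : ∀ {z z' : Z}, (z ⟶ z') → ℝ≥0∞)
    (hX0 : ∀ x : X, wX (𝟙 x) = 0)
    (hX1 : ∀ {x x' x'' : X} (f : x ⟶ x') (g : x' ⟶ x''), wX (f ≫ g) ≤ wX f + wX g)
    (hY0 : ∀ y : Y, wY (𝟙 y) = 0)
    (hY1 : ∀ {y y' y'' : Y} (f : y ⟶ y') (g : y' ⟶ y''), wY (f ≫ g) ≤ wY f + wY g)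
    (hZ0 : ∀ z : Z, wZ (𝟙 z) = 0)
    (hZ1 : ∀ {z z' z'' : Z} (f : z ⟶ z') (g : z' ⟶ z''), wZ (f ≫ g) ≤ wZ f + wZ g)
    (F : X × Y ⥤ Z) :
    (∀ {p q : X × Y} (f : p ⟶ q), wZ (F.map f) ≤ wX f.1 + wY f.2) ↔
    ((∀ (x : X) {y y' : Y} (b : y ⟶ y'),
        wZ (F.map ((𝟙 x, b) : (x, y) ⟶ (x, y'))) ≤ wY b) ∧
     (∀ {x x' : X} (a : x ⟶ x'),
        (⨆ y : Y, wZ (F.map ((a, 𝟙 y) : (x, y) ⟶ (x', y)))) ≤ wX a)) := by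
  constructor
  · intro h
    refine ⟨fun x {y y'} b => ?_, fun {x x'} a => ?_⟩
    · simpa [hX0] using h ((𝟙 x, b) : (x, y) ⟶ (x, y'))
    · exact iSup_le fun y => by simpa [hY0] using h ((a, 𝟙 y) : (x, y) ⟶ (x', y))
  · rintro ⟨h1, h2⟩ ⟨x, y⟩ ⟨x', y'⟩ ⟨a, b⟩
    have hfac : (F.map ((a, b) : (x, y) ⟶ (x', y'))) =
        F.map ((a, 𝟙 y) : (x, y) ⟶ (x', y)) ≫ F.map ((𝟙 x', b) : (x', y) ⟶ (x', y')) := by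
      rw [← F.map_comp]
      congr 1
      simp [prod_comp]
    calc wZ (F.map ((a, b) : (x, y) ⟶ (x', y')))
        ≤ wZ (F.map ((a, 𝟙 y) : (x, y) ⟶ (x', y))) +
            wZ (F.map ((𝟙 x', b) : (x', y) ⟶ (x', y'))) := by rw [hfac]; exact hZ1 _ _
      _ ≤ wX a + wY b := add_le_add (le_trans (le_iSup (fun y => wZ (F.map ((a, 𝟙 y) : (x, y) ⟶ (x', y)))) y) (h2 a)) (h1 x' b)
end

section
/- Let Y be a locally compact Hausdorff topological space with a weight function w_Y on its continuous paths satisfying the w-space axioms and, in addition, linear: w_Y(b' + b'') = w_Y(b') + w_Y(b''). Let Z be a topological space with a weight function w_Z on its continuous paths satisfying the w-space axioms. Give the space of continuous maps Y → Z the compact-open topology, and for a continuous path c : [0,1] → C(Y,Z) define W(c) = sup over continuous paths b : [0,1] → Y of (w_Z(ev∘(c,b)) ∸ w_Y(b)), where ev∘(c,b)(t) = c(t)(b(t)) (which is continuous) and ∸ is truncated subtraction in [0,∞]. Then: (i) if c is constant at a map h with w_Z(h∘b) ≤ w_Y(b) for all paths b in Y, then W(c) = 0; (ii) W(c' + c'')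 ≤ W(c') + W(c'') for every concatenation of paths in C(Y,Z); (iii) max(W(c'), W(c'')) ≤ W(c' + c''); and (iv) W(c ∘ ρ) = W(c) for every strictly increasing bijection ρ of [0,1] onto itself. Hence W makes the set of 1-Lipschitz maps Y → Z into a space with weighted paths (the internal hom Z^Y exhibiting Y as ⊗-exponentiable). -/
open scoped ENNReal

/-- The weight on paths in the mapping space `C(Y, Z)` (with the compact-open topology):
`W(c) = sup` over continuous paths `b : [0,1] → Y` of
`w_Z(ev ∘ (c, b)) ∸ w_Y(b)`, where `(ev ∘ (c, b))(t) = c(t)(b(t))` and `∸` is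
truncated subtraction in `[0,∞]`. -/
noncomputable def Wgt {Y Z : Type*} [TopologicalSpace Y] [TopologicalSpace Z]
    (wY : (unitInterval → Y) → ℝ≥0∞) (wZ : (unitInterval → Z) → ℝ≥0∞)
    (c : unitInterval → C(Y, Z)) : ℝ≥0∞ :=
  ⨆ b : {f : unitInterval → Y // Continuous f},
    (wZ (fun t => c t (b.val t)) - wY b.val)

noncomputable def projI : ℝ → unitInterval := Set.projIcc 0 1 zero_le_one

lemma concat_eq_ite {X : Type*} (a b : unitInterval → X) (t : unitInterval) :
    concat a b t = if (t:ℝ) ≤ 1/2 then a (projI (2*t)) else b (projI (2*t-1)) := by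
  unfold concat projI
  split_ifs with h
  · congr 1
    rw [Set.projIcc_of_mem]
  · congr 1
    rw [Set.projIcc_of_mem]

lemma continuous_concat {X : Type*} [TopologicalSpace X] {a b : unitInterval → X}
    (ha : Continuous a) (hb : Continuous b) (hab : a 1 = b 0) :
    Continuous (concat a b) := by
  have he : concat a b = fun t : unitInterval =>
      if (t:ℝ) ≤ 1/2 then a (projI (2*t)) else b (projI (2*t-1)) :=
    funext fun t => concat_eq_ite a b t
  rw [he]
  apply Continuous.if_le
  · exact ha.comp ((continuous_projIcc).comp (by continuity))
  · exact hb.comp ((continuous_projIcc).comp (by continuity))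
  · exact continuous_subtype_val
  · exact continuous_const
  · intro t ht
    have h1 : (2 * (t:ℝ)) = 1 := by rw [ht]; ring
    have h2 : (2 * (t:ℝ) - 1) = 0 := by rw [ht]; ring
    rw [h2, h1]
    have hp1 : projI 1 = 1 := by simp [projI]
    have hp0 : projI 0 = 0 := by simp [projI]
    rw [hp1, hp0, hab]

noncomputable def rho1 : unitInterval → unitInterval := fun s =>
  ⟨(s:ℝ)/2, Set.mem_Icc.mpr ⟨by have := s.2.1; linarith, by have := s.2.2; linarith⟩⟩

noncomputable def rho2 : unitInterval → unitInterval := fun s =>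
  ⟨((s:ℝ)+1)/2, Set.mem_Icc.mpr ⟨by have := s.2.1; linarith, by have := s.2.2; linarith⟩⟩

lemma continuous_rho1 : Continuous rho1 := by
  apply Continuous.subtype_mk; continuity

lemma continuous_rho2 : Continuous rho2 := by
  apply Continuous.subtype_mk; continuity

lemma strictMono_rho1 : StrictMono rho1 := fun s t h => by
  simp only [rho1, Subtype.mk_lt_mk]
  have : (s:ℝ) < t := h
  linarith

lemma strictMono_rho2 : StrictMono rho2 := fun s t h => by
  simp only [rho2, Subtype.mk_lt_mk]
  have : (s:ℝ) < t := h
  linarith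

lemma concat_halves {X : Type*} (b : unitInterval → X) : concat (b ∘ rho1) (b ∘ rho2) = b := by
  funext t
  unfold concat rho1 rho2
  split_ifs with h
  · exact congrArg b (Subtype.ext (by push_cast; ring))
  · exact congrArg b (Subtype.ext (by push_cast; ring))

lemma eval_concat {Y Z : Type*} [TopologicalSpace Y] [TopologicalSpace Z]
    (c' c'' : unitInterval → C(Y, Z)) (b' b'' : unitInterval → Y) :
    (fun t => concat c' c'' t (concat b' b'' t))
      = concat (fun s => c' s (b' s)) (fun s => c'' s (b'' s)) := by
  funext t
  unfold concat
  split_ifs with h <;> rfl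

lemma concat_comp_rho1 {X : Type*} (a b : unitInterval → X) : concat a b ∘ rho1 = a := by
  funext s
  show concat a b (rho1 s) = a s
  unfold concat rho1
  rw [dif_pos (by have := s.2.2; show (s:ℝ)/2 ≤ 1/2; linarith)]
  exact congrArg a (Subtype.ext (by push_cast; ring))

lemma concat_comp_rho2 {X : Type*} (a b : unitInterval → X) (hab : a 1 = b 0) :
    concat a b ∘ rho2 = b := by
  funext s
  show concat a b (rho2 s) = b s
  unfold concat rho2
  split_ifs with h
  · have h' : ((s:ℝ)+1)/2 ≤ 1/2 := h
    have hs : s = 0 := by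
      apply Subtype.ext
      show (s:ℝ) = ((0:unitInterval):ℝ)
      rw [Set.Icc.coe_zero]
      have := s.2.1
      linarith
    subst hs
    rw [← hab]
    exact congrArg a (Subtype.ext (by norm_num))
  · exact congrArg b (Subtype.ext (by push_cast; ring))

lemma rho1_one : rho1 1 = rho2 0 := Subtype.ext (by simp [rho1, rho2])

lemma cont_eval {Y Z : Type*} [TopologicalSpace Y] [LocallyCompactSpace Y] [TopologicalSpace Z]
    {c : unitInterval → C(Y, Z)} {b : unitInterval → Y} (hc : Continuous c) (hb : Continuous b) :
    Continuous fun t => c t (b t) :=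
  ContinuousEval.continuous_eval.comp (hc.prodMk hb)

/-- If `Y` is a locally compact Hausdorff w-space whose weight is moreover linear, and
`Z` is any w-space, then the weight `W` on paths of `C(Y, Z)` (compact-open topology)
satisfies the w-space axioms: `W` vanishes on paths constant at a 1-Lipschitz map, is
subadditive under concatenation, satisfies `max(W c', W c'') ≤ W (c' + c'')`, and is
invariant under strictly increasing bijective reparametrisations.  Hence `Z^Y` is a
space with weighted paths, exhibiting `Y` as ⊗-exponentiable. -/
theorem mapping_space_weight_axioms {Y Z : Type*}
    [TopologicalSpace Y] [LocallyCompactSpace Y] [T2Space Y] [TopologicalSpace Z]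
    (wY : (unitInterval → Y) → ℝ≥0∞) (wZ : (unitInterval → Z) → ℝ≥0∞)
    (hY0 : ∀ y : Y, wY (fun _ => y) = 0)
    (hY1 : ∀ a b : unitInterval → Y, Continuous a → Continuous b → a 1 = b 0 →
      wY (concat a b) = wY a + wY b)
    (hY2 : ∀ (a : unitInterval → Y) (ρ : unitInterval → unitInterval),
      Continuous a → Continuous ρ → StrictMono ρ → wY (a ∘ ρ) ≤ wY a)
    (hZ0 : ∀ z : Z, wZ (fun _ => z) = 0)
    (hZ1 : ∀ a b : unitInterval → Z, Continuous a → Continuous b → a 1 = b 0 →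
      wZ (concat a b) ≤ wZ a + wZ b)
    (hZ2 : ∀ (a : unitInterval → Z) (ρ : unitInterval → unitInterval),
      Continuous a → Continuous ρ → StrictMono ρ → wZ (a ∘ ρ) ≤ wZ a) :
    (∀ h : C(Y, Z),
      (∀ b : unitInterval → Y, Continuous b → wZ (fun t => h (b t)) ≤ wY b) →
      Wgt wY wZ (fun _ => h) = 0) ∧
    (∀ c' c'' : unitInterval → C(Y, Z), Continuous c' → Continuous c'' → c' 1 = c'' 0 →
      Wgt wY wZ (concat c' c'') ≤ Wgt wY wZ c' + Wgt wY wZ c'') ∧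
    (∀ c' c'' : unitInterval → C(Y, Z), Continuous c' → Continuous c'' → c' 1 = c'' 0 →
      max (Wgt wY wZ c') (Wgt wY wZ c'') ≤ Wgt wY wZ (concat c' c'')) ∧
    (∀ (c : unitInterval → C(Y, Z)) (ρ : unitInterval → unitInterval),
      Continuous c → StrictMono ρ → Function.Bijective ρ →
      Wgt wY wZ (c ∘ ρ) = Wgt wY wZ c) := by
  refine ⟨?_, ?_, ?_, ?_⟩
  · -- (i)
    intro h hle
    simp only [Wgt, ENNReal.iSup_eq_zero]
    rintro ⟨b, hb⟩
    exact tsub_eq_zero_of_le (hle b hb)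
  · -- (ii)
    intro c' c'' hc' hc'' hcc
    simp only [Wgt]
    refine iSup_le ?_
    rintro ⟨b, hb⟩
    have hb₁ : Continuous (b ∘ rho1) := hb.comp continuous_rho1
    have hb₂ : Continuous (b ∘ rho2) := hb.comp continuous_rho2
    have hm : (b ∘ rho1) 1 = (b ∘ rho2) 0 := congrArg b rho1_one
    have hbeq : concat (b ∘ rho1) (b ∘ rho2) = b := concat_halves b
    have hE : (fun t => concat c' c'' t (b t))
        = concat (fun s => c' s ((b ∘ rho1) s)) (fun s => c'' s ((b ∘ rho2) s)) := by
      conv_lhs => rw [← hbeq]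
      exact eval_concat c' c'' (b ∘ rho1) (b ∘ rho2)
    have he1 : Continuous fun s => c' s ((b ∘ rho1) s) := cont_eval hc' hb₁
    have he2 : Continuous fun s => c'' s ((b ∘ rho2) s) := cont_eval hc'' hb₂
    have hm2 : c' 1 ((b ∘ rho1) 1) = c'' 0 ((b ∘ rho2) 0) := by rw [hcc, hm]
    have hZb := hZ1 _ _ he1 he2 hm2
    have hYb : wY b = wY (b ∘ rho1) + wY (b ∘ rho2) := by
      conv_lhs => rw [← hbeq]
      exact hY1 _ _ hb₁ hb₂ hm
    calc wZ (fun t => concat c' c'' t (b t)) - wY b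
        ≤ (wZ (fun s => c' s ((b ∘ rho1) s)) + wZ (fun s => c'' s ((b ∘ rho2) s)))
            - (wY (b ∘ rho1) + wY (b ∘ rho2)) := by
          rw [hE, hYb]; exact tsub_le_tsub hZb le_rfl
      _ ≤ (wZ (fun s => c' s ((b ∘ rho1) s)) - wY (b ∘ rho1))
            + (wZ (fun s => c'' s ((b ∘ rho2) s)) - wY (b ∘ rho2)) :=
          add_tsub_add_le_tsub_add_tsub
      _ ≤ Wgt wY wZ c' + Wgt wY wZ c'' := by
          apply add_le_add
          · exact le_iSup (fun p : {f : unitInterval → Y // Continuous f} =>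
              wZ (fun t => c' t (p.val t)) - wY p.val) ⟨b ∘ rho1, hb₁⟩
          · exact le_iSup (fun p : {f : unitInterval → Y // Continuous f} =>
              wZ (fun t => c'' t (p.val t)) - wY p.val) ⟨b ∘ rho2, hb₂⟩
  · -- (iii)
    intro c' c'' hc' hc'' hcc
    refine max_le (iSup_le ?_) (iSup_le ?_)
    · rintro ⟨b, hb⟩
      have he1 : Continuous fun s => c' s (b s) := cont_eval hc' hb
      have he2 : Continuous fun s : unitInterval => c'' s (b 1) := cont_eval hc'' continuous_const
      have hbt : Continuous (concat b (fun _ => b 1)) :=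
        continuous_concat hb continuous_const rfl
      have hm : (fun s => c' s (b s)) 1 = (fun s : unitInterval => c'' s (b 1)) 0 := by
        show c' 1 (b 1) = c'' 0 (b 1); rw [hcc]
      have hE : (fun t => concat c' c'' t (concat b (fun _ => b 1) t))
          = concat (fun s => c' s (b s)) (fun s => c'' s (b 1)) :=
        eval_concat c' c'' b (fun _ => b 1)
      have h1 : wZ (fun s => c' s (b s))
          ≤ wZ (fun t => concat c' c'' t (concat b (fun _ => b 1) t)) := by
        rw [hE]
        have h2 := hZ2 _ rho1 (continuous_concat he1 he2 hm) continuous_rho1 strictMono_rho1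
        rwa [concat_comp_rho1 (fun s => c' s (b s)) (fun s => c'' s (b 1))] at h2
      have hYbt : wY (concat b (fun _ => b 1)) = wY b := by
        rw [hY1 b (fun _ => b 1) hb continuous_const rfl, hY0, add_zero]
      calc wZ (fun t => c' t (b t)) - wY b
          ≤ wZ (fun t => concat c' c'' t (concat b (fun _ => b 1) t))
              - wY (concat b (fun _ => b 1)) := by
            rw [hYbt]; exact tsub_le_tsub h1 le_rfl
        _ ≤ Wgt wY wZ (concat c' c'') :=
            le_iSup (fun p : {f : unitInterval → Y // Continuous f} =>
              wZ (fun t => concat c' c'' t (p.val t)) - wY p.val)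
              ⟨concat b (fun _ => b 1), hbt⟩
    · rintro ⟨b, hb⟩
      have he1 : Continuous fun s : unitInterval => c' s (b 0) := cont_eval hc' continuous_const
      have he2 : Continuous fun s => c'' s (b s) := cont_eval hc'' hb
      have hbt : Continuous (concat (fun _ => b 0) b) :=
        continuous_concat continuous_const hb rfl
      have hm : (fun s : unitInterval => c' s (b 0)) 1 = (fun s => c'' s (b s)) 0 := by
        show c' 1 (b 0) = c'' 0 (b 0); rw [hcc]
      have hE : (fun t => concat c' c'' t (concat (fun _ => b 0) b t))
          = concat (fun s => c' s (b 0)) (fun s => c'' s (b s)) :=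
        eval_concat c' c'' (fun _ => b 0) b
      have h1 : wZ (fun s => c'' s (b s))
          ≤ wZ (fun t => concat c' c'' t (concat (fun _ => b 0) b t)) := by
        rw [hE]
        have h2 := hZ2 _ rho2 (continuous_concat he1 he2 hm) continuous_rho2 strictMono_rho2
        rwa [concat_comp_rho2 (fun s : unitInterval => c' s (b 0)) (fun s => c'' s (b s)) hm] at h2
      have hYbt : wY (concat (fun _ => b 0) b) = wY b := by
        rw [hY1 (fun _ => b 0) b continuous_const hb rfl, hY0, zero_add]
      calc wZ (fun t => c'' t (b t)) - wY b
          ≤ wZ (fun t => concat c' c'' t (concat (fun _ => b 0) b t))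
              - wY (concat (fun _ => b 0) b) := by
            rw [hYbt]; exact tsub_le_tsub h1 le_rfl
        _ ≤ Wgt wY wZ (concat c' c'') :=
            le_iSup (fun p : {f : unitInterval → Y // Continuous f} =>
              wZ (fun t => concat c' c'' t (p.val t)) - wY p.val)
              ⟨concat (fun _ => b 0) b, hbt⟩
  · -- (iv)
    have Wle : ∀ (c : unitInterval → C(Y, Z)) (ρ σ : unitInterval → unitInterval),
        Continuous c → Continuous ρ → StrictMono ρ → Continuous σ → StrictMono σ →
        (∀ t, σ (ρ t) = t) → Wgt wY wZ (c ∘ ρ) ≤ Wgt wY wZ c := by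
      intro c ρ σ hc hρ hρm hσ hσm hσρ
      refine iSup_le ?_
      rintro ⟨b, hb⟩
      have hb' : Continuous (b ∘ σ) := hb.comp hσ
      have key : (fun t => c t ((b ∘ σ) t)) ∘ ρ = fun t => (c ∘ ρ) t (b t) := by
        funext t
        simp only [Function.comp_apply, hσρ t]
      have h1 : wZ (fun t => (c ∘ ρ) t (b t)) ≤ wZ (fun t => c t ((b ∘ σ) t)) := by
        rw [← key]
        exact hZ2 _ ρ (cont_eval hc hb') hρ hρm
      have h2 : wY (b ∘ σ) ≤ wY b := hY2 b σ hb hσ hσm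
      calc wZ (fun t => (c ∘ ρ) t (b t)) - wY b
          ≤ wZ (fun t => c t ((b ∘ σ) t)) - wY (b ∘ σ) := tsub_le_tsub h1 h2
        _ ≤ Wgt wY wZ c :=
            le_iSup (fun p : {f : unitInterval → Y // Continuous f} =>
              wZ (fun t => c t (p.val t)) - wY p.val) ⟨b ∘ σ, hb'⟩
    intro c ρ hc hρm hρbij
    let e : unitInterval ≃o unitInterval := StrictMono.orderIsoOfSurjective ρ hρm hρbij.2
    have hce : ⇑e = ρ := rfl
    have hρc : Continuous ρ := by rw [← hce]; exact e.continuous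
    have hσc : Continuous ⇑e.symm := e.symm.continuous
    have hσm : StrictMono ⇑e.symm := e.symm.strictMono
    have hσρ : ∀ t, e.symm (ρ t) = t := fun t => e.symm_apply_apply t
    have hρσ : ∀ t, ρ (e.symm t) = t := fun t => e.apply_symm_apply t
    refine le_antisymm (Wle c ρ ⇑e.symm hc hρc hρm hσc hσm hσρ) ?_
    have hcomp : (c ∘ ρ) ∘ ⇑e.symm = c := by
      funext t; simp only [Function.comp_apply, hρσ t]
    have := Wle (c ∘ ρ) ⇑e.symm ρ (hc.comp hρc) hσc hσm hρc hρm hρσ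
    rwa [hcomp] at this
end

section
/- Let ϑ and ϑ' be irrational real numbers, G_ϑ = {m + n·ϑ : m, n ∈ ℤ} and G_ϑ^+ = G_ϑ ∩ [0,∞). Then the following are equivalent: (i) G_ϑ^+ = G_{ϑ'}^+ as subsets of ℝ; (ii) G_ϑ = G_{ϑ'} as subsets of ℝ; (iii) there exists n ∈ ℤ with ϑ' = n + ϑ or ϑ' = n − ϑ. -/
/-- `G_θ = ℤ + θℤ`, as a subset of `ℝ`. -/
def Gset (θ : ℝ) : Set ℝ := {x | ∃ m n : ℤ, x = m + n * θ}

lemma Gset.neg_mem {θ x : ℝ} (h : x ∈ Gset θ) : -x ∈ Gset θ := by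
  obtain ⟨m, n, rfl⟩ := h
  exact ⟨-m, -n, by push_cast; ring⟩

/-- For irrationals `θ`, `θ'` the following are equivalent: `G_θ⁺ = G_{θ'}⁺`;
`G_θ = G_{θ'}`; and `θ' = n + θ` or `θ' = n − θ` for some integer `n`. -/
theorem G_theta_isometric_classification (θ θ' : ℝ)
    (hθ : Irrational θ) (hθ' : Irrational θ') :
    ({x ∈ Gset θ | 0 ≤ x} = {x ∈ Gset θ' | 0 ≤ x} ↔ Gset θ = Gset θ') ∧
    (Gset θ = Gset θ' ↔ ∃ n : ℤ, θ' = n + θ ∨ θ' = n - θ) := by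
  constructor
  · constructor
    · intro h
      have key : ∀ a b : ℝ, {x ∈ Gset a | 0 ≤ x} = {x ∈ Gset b | 0 ≤ x} →
          Gset a ⊆ Gset b := by
        intro a b hab x hx
        rcases le_or_gt 0 x with hx0 | hx0
        · have : x ∈ {x ∈ Gset b | 0 ≤ x} := hab ▸ ⟨hx, hx0⟩
          exact this.1
        · have : -x ∈ {x ∈ Gset b | 0 ≤ x} := hab ▸ ⟨Gset.neg_mem hx, by linarith⟩
          simpa using Gset.neg_mem this.1
      exact Set.Subset.antisymm (key θ θ' h) (key θ' θ h.symm)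
    · intro h; rw [h]
  · constructor
    · intro h
      have h1 : θ' ∈ Gset θ := h ▸ ⟨0, 1, by simp⟩
      have h2 : θ ∈ Gset θ' := h.symm ▸ ⟨0, 1, by simp⟩
      obtain ⟨m, n, hmn⟩ := h1
      obtain ⟨m', n', hmn'⟩ := h2
      have key : θ' * (1 - (n : ℝ) * n') = m + n * m' := by
        rw [hmn'] at hmn; nlinarith [hmn]
      have hnn : (n : ℤ) * n' = 1 := by
        by_contra hne
        have hne' : (1 : ℝ) - (n : ℝ) * n' ≠ 0 := by
          intro hc
          apply hne
          have : ((n * n' : ℤ) : ℝ) = ((1 : ℤ) : ℝ) := by push_cast; linarith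
          exact_mod_cast this
        have : θ' = ((m + n * m' : ℤ) : ℝ) / (((1 - n * n' : ℤ)) : ℝ) := by
          push_cast
          field_simp
          linarith [key]
        exact hθ'.ne_rational _ _ this
      have hn : n = 1 ∨ n = -1 := Int.isUnit_iff.1 (IsUnit.of_mul_eq_one _ hnn)
      rcases hn with rfl | rfl
      · refine ⟨m, Or.inl ?_⟩
        push_cast at hmn ⊢; linarith
      · refine ⟨m, Or.inr ?_⟩
        push_cast at hmn ⊢; linarith
    · rintro ⟨n, rfl | rfl⟩
      · ext x
        constructor
        · rintro ⟨a, b, rfl⟩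
          exact ⟨a - b * n, b, by push_cast; ring⟩
        · rintro ⟨a, b, rfl⟩
          exact ⟨a + b * n, b, by push_cast; ring⟩
      · ext x
        constructor
        · rintro ⟨a, b, rfl⟩
          exact ⟨a + b * n, -b, by push_cast; ring⟩
        · rintro ⟨a, b, rfl⟩
          exact ⟨a + b * n, -b, by push_cast; ring⟩
end

section
/- Let ϑ and ϑ' be irrational real numbers. There exists an additive group isomorphism f : G_ϑ → G_{ϑ'} which is order-preserving (with respect to the orders induced by ℝ) if and only if there exist integers a, b, c, d with a·d − b·c = ±1 and ϑ' = (a·ϑ + b)/(c·ϑ + d), i.e. if and only if ϑ and ϑ' are conjugate under the fractional action of GL(2,ℤ). -/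
/-- `G_θ = ℤ + θℤ`, as an additive subgroup of `ℝ`. -/
def Gsub (θ : ℝ) : AddSubgroup ℝ where
  carrier := {x | ∃ m n : ℤ, x = m + n * θ}
  zero_mem' := ⟨0, 0, by simp⟩
  add_mem' := by
    rintro x y ⟨m1, n1, rfl⟩ ⟨m2, n2, rfl⟩
    exact ⟨m1 + m2, n1 + n2, by push_cast; ring⟩
  neg_mem' := by
    rintro x ⟨m, n, rfl⟩
    exact ⟨-m, -n, by push_cast; ring⟩

lemma mem_Gsub {θ x : ℝ} : x ∈ Gsub θ ↔ ∃ m n : ℤ, x = m + n * θ := Iff.rfl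

lemma Gsub_unique {θ : ℝ} (hθ : Irrational θ) {m n m' n' : ℤ}
    (h : (m : ℝ) + n * θ = m' + n' * θ) : m = m' ∧ n = n' := by
  by_cases hn : n = n'
  · subst hn
    refine ⟨?_, rfl⟩
    have : (m : ℝ) = m' := by linarith
    exact_mod_cast this
  · exfalso
    have hnn : ((n' - n : ℤ) : ℝ) ≠ 0 := by
      exact_mod_cast sub_ne_zero.mpr (Ne.symm hn)
    have : θ = ((m - m' : ℤ) : ℝ) / ((n' - n : ℤ) : ℝ) := by
      rw [eq_div_iff hnn]
      push_cast
      linarith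
    apply hθ
    exact ⟨((m - m' : ℤ) : ℚ) / ((n' - n : ℤ) : ℚ), by push_cast [this]; ring⟩

lemma exists_mono_equiv {θ θ' μ : ℝ} (hμ : 0 < μ)
    (h1 : ∀ x ∈ Gsub θ, μ * x ∈ Gsub θ')
    (h2 : ∀ y ∈ Gsub θ', μ⁻¹ * y ∈ Gsub θ) :
    ∃ f : Gsub θ ≃+ Gsub θ', Monotone f := by
  have hμ0 : μ ≠ 0 := ne_of_gt hμ
  refine ⟨{ toFun := fun x => ⟨μ * x, h1 x x.2⟩,
            invFun := fun y => ⟨μ⁻¹ * y, h2 y y.2⟩,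
            left_inv := ?_, right_inv := ?_, map_add' := ?_ }, ?_⟩
  · intro x
    ext
    simp [hμ0]
  · intro y
    ext
    simp [hμ0]
  · intro x y
    ext
    simp
    ring
  · intro x y hxy
    have : (x : ℝ) ≤ y := hxy
    show (⟨μ * x, _⟩ : Gsub θ') ≤ ⟨μ * y, _⟩
    exact Subtype.mk_le_mk.mpr (mul_le_mul_of_nonneg_left this hμ.le)

lemma easy_dir {θ θ' : ℝ} (hθ : Irrational θ)
    (a b c d : ℤ) (hdet : a * d - b * c = 1 ∨ a * d - b * c = -1)
    (heq : θ' = (a * θ + b) / (c * θ + d)) :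
    ∃ f : Gsub θ ≃+ Gsub θ', Monotone f := by
  have hε2 : ((a : ℝ) * d - b * c) * ((a : ℝ) * d - b * c) = 1 := by
    have : ((a * d - b * c : ℤ) : ℝ) * ((a * d - b * c : ℤ) : ℝ) = 1 := by
      rcases hdet with h | h <;> rw [h] <;> norm_num
    push_cast at this
    linarith [this]
  have hL0 : (c : ℝ) * θ + d ≠ 0 := by
    intro h0
    by_cases hc : c = 0
    · rw [hc] at h0
      simp at h0
      have hd : d = 0 := by exact_mod_cast h0
      rcases hdet with h | h <;> rw [hc, hd] at h <;> simp at h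
    · have hcR : (c : ℝ) ≠ 0 := Int.cast_ne_zero.mpr hc
      have : θ = ((-d : ℤ) : ℝ) / ((c : ℤ) : ℝ) := by
        rw [eq_div_iff hcR]; push_cast; linarith [h0]
      apply hθ
      exact ⟨((-d : ℤ) : ℚ) / ((c : ℤ) : ℚ), by push_cast [this]; ring⟩
  have hθL : θ' * ((c : ℝ) * θ + d) = a * θ + b := by
    rw [heq, div_mul_cancel₀ _ hL0]
  have hdiv : ∀ x ∈ Gsub θ, x / ((c : ℝ) * θ + d) ∈ Gsub θ' := by
    rintro x ⟨u, v, rfl⟩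
    refine ⟨(a * d - b * c) * (a * u - b * v), (a * d - b * c) * (-(c * u) + d * v), ?_⟩
    rw [div_eq_iff hL0]
    push_cast
    linear_combination (-(((a : ℝ) * d - b * c) * (-((c : ℝ) * u) + d * v))) * hθL -
      ((u : ℝ) + v * θ) * hε2
  have hmul : ∀ y ∈ Gsub θ', ((c : ℝ) * θ + d) * y ∈ Gsub θ := by
    rintro y ⟨m, n, rfl⟩
    refine ⟨m * d + n * b, m * c + n * a, ?_⟩
    push_cast
    linear_combination (n : ℝ) * hθL
  rcases lt_or_gt_of_ne hL0 with hneg | hpos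
  · refine exists_mono_equiv (μ := -((c : ℝ) * θ + d)⁻¹)
      (neg_pos.mpr (inv_lt_zero.mpr hneg)) ?_ ?_
    · intro x hx
      have := (Gsub θ').neg_mem (hdiv x hx)
      have h : -((c : ℝ) * θ + d)⁻¹ * x = -(x / ((c : ℝ) * θ + d)) := by
        field_simp
      rw [h]; exact this
    · intro y hy
      have := (Gsub θ).neg_mem (hmul y hy)
      have h : (-((c : ℝ) * θ + d)⁻¹)⁻¹ * y = -(((c : ℝ) * θ + d) * y) := by
        field_simp
      rw [h]; exact this
  · refine exists_mono_equiv (μ := ((c : ℝ) * θ + d)⁻¹) (inv_pos.mpr hpos) ?_ ?_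
    · intro x hx
      simpa [div_eq_inv_mul] using hdiv x hx
    · intro y hy
      simpa using hmul y hy


lemma pos_of_pos {θ θ' : ℝ} (f : Gsub θ ≃+ Gsub θ') (hf : Monotone f)
    (x : Gsub θ) (hx : 0 < (x : ℝ)) : 0 < (f x : ℝ) := by
  have hxne : x ≠ 0 := fun h0 => absurd (h0 ▸ hx) (lt_irrefl _)
  have h0le : (0 : Gsub θ) ≤ x := hx.le
  have h1 : f 0 ≤ f x := hf h0le
  rw [map_zero] at h1
  have hne : f x ≠ 0 := fun h0 => hxne (f.injective (by rw [h0, map_zero]))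
  have h1' : (0 : ℝ) ≤ (f x : ℝ) := h1
  rcases h1'.lt_or_eq with h | h
  · exact h
  · exact absurd (Subtype.ext h.symm) hne

lemma key_ineq {θ θ' : ℝ} (f : Gsub θ ≃+ Gsub θ') (hf : Monotone f)
    (x y : Gsub θ) (hx : 0 < (x : ℝ)) (hy : 0 < (y : ℝ)) :
    (f x : ℝ) * y ≤ (f y : ℝ) * x := by
  have hfx := pos_of_pos f hf x hx
  have hfy := pos_of_pos f hf y hy
  by_contra hcon
  push_neg at hcon
  -- hcon : (f y) * x < (f x) * y
  have hdiv : (f y : ℝ) / (f x : ℝ) < (y : ℝ) / (x : ℝ) := by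
    rw [div_lt_div_iff₀ hfx hx]
    linarith
  obtain ⟨r, hr1, hr2⟩ := exists_rat_btwn hdiv
  have hrpos : (0 : ℝ) < (r : ℚ) := lt_trans (by positivity) hr1
  have hrpos' : 0 < r := by exact_mod_cast hrpos
  set p : ℤ := r.num with hp
  set q : ℤ := (r.den : ℤ) with hq
  have hppos : 0 < p := Rat.num_pos.mpr hrpos'
  have hqpos : 0 < q := by rw [hq]; exact_mod_cast r.den_pos
  have hqR : (0:ℝ) < (q : ℝ) := by exact_mod_cast hqpos
  have hpR : (0:ℝ) < (p : ℝ) := by exact_mod_cast hppos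
  have hcast : (r : ℝ) = (p : ℝ) / (q : ℝ) := by
    rw [Rat.cast_def]; norm_num [hp, hq]
  rw [hcast] at hr1 hr2
  -- from hr2 : p/q < y/x  we get  p * x < q * y
  have h1 : (p : ℝ) * x < (q : ℝ) * y := by
    rw [div_lt_div_iff₀ hqR hx] at hr2
    linarith
  have hle : p • x ≤ q • y := by
    have : ((p • x : Gsub θ) : ℝ) ≤ ((q • y : Gsub θ) : ℝ) := by
      rw [AddSubgroup.coe_zsmul, AddSubgroup.coe_zsmul, zsmul_eq_mul, zsmul_eq_mul]
      exact h1.le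
    exact this
  have h2 : f (p • x) ≤ f (q • y) := hf hle
  rw [map_zsmul, map_zsmul] at h2
  have h3 : (p : ℝ) * (f x : ℝ) ≤ (q : ℝ) * (f y : ℝ) := by
    have : ((p • f x : Gsub θ') : ℝ) ≤ ((q • f y : Gsub θ') : ℝ) := h2
    rwa [AddSubgroup.coe_zsmul, AddSubgroup.coe_zsmul, zsmul_eq_mul, zsmul_eq_mul] at this
  -- from hr1 : (f y)/(f x) < p/q  we get  q * (f y) < p * (f x)
  have h4 : (f y : ℝ) * q < (p : ℝ) * (f x : ℝ) := by
    rw [div_lt_div_iff₀ hfx hqR] at hr1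
    linarith
  linarith

lemma f_linear {θ θ' : ℝ} (f : Gsub θ ≃+ Gsub θ') (hf : Monotone f)
    (x : Gsub θ) :
    (f x : ℝ) = (f ⟨1, 1, 0, by push_cast; ring⟩ : ℝ) * x := by
  set one : Gsub θ := ⟨1, 1, 0, by push_cast; ring⟩ with hone
  have hone1 : (one : ℝ) = 1 := rfl
  have honepos : 0 < (one : ℝ) := by rw [hone1]; norm_num
  rcases lt_trichotomy (0 : ℝ) (x : ℝ) with hx | hx | hx
  · have k1 := key_ineq f hf x one hx honepos
    have k2 := key_ineq f hf one x honepos hx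
    rw [hone1] at k1 k2
    linarith
  · have hx0 : x = 0 := Subtype.ext hx.symm
    rw [hx0, map_zero]
    show ((0 : Gsub θ') : ℝ) = _ * ((0 : Gsub θ) : ℝ)
    norm_num
  · have hnx : 0 < ((-x : Gsub θ) : ℝ) := by
      show 0 < -(x : ℝ); linarith
    have k1 := key_ineq f hf (-x) one hnx honepos
    have k2 := key_ineq f hf one (-x) honepos hnx
    rw [hone1] at k1 k2
    have hfneg : (f (-x) : ℝ) = -(f x : ℝ) := by rw [map_neg]; rfl
    have hcneg : ((-x : Gsub θ) : ℝ) = -(x : ℝ) := rfl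
    rw [hfneg, hcneg] at k1 k2
    linarith

lemma hard_dir {θ θ' : ℝ} (hθ : Irrational θ)
    (f : Gsub θ ≃+ Gsub θ') (hf : Monotone f) :
    ∃ a b c d : ℤ, (a * d - b * c = 1 ∨ a * d - b * c = -1) ∧
      θ' = (a * θ + b) / (c * θ + d) := by
  set one : Gsub θ := ⟨1, 1, 0, by push_cast; ring⟩ with hone
  set L : ℝ := (f one : ℝ) with hLdef
  have hlin : ∀ x : Gsub θ, (f x : ℝ) = L * x := fun x => f_linear f hf x
  have hLpos : 0 < L := pos_of_pos f hf one (by norm_num [hone])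
  have hL0 : L ≠ 0 := ne_of_gt hLpos
  have hsym : ∀ y : Gsub θ', (f.symm y : ℝ) = L⁻¹ * y := by
    intro y
    have h := hlin (f.symm y)
    rw [f.apply_symm_apply] at h
    field_simp
    linarith
  set tθ : Gsub θ := ⟨θ, 0, 1, by push_cast; ring⟩ with htθ
  set one' : Gsub θ' := ⟨1, 1, 0, by push_cast; ring⟩ with hone'
  set tθ' : Gsub θ' := ⟨θ', 0, 1, by push_cast; ring⟩ with htθ'
  obtain ⟨p, q, hpq⟩ := (f one).2
  obtain ⟨r, s, hrs⟩ := (f tθ).2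
  obtain ⟨p', q', hpq'⟩ := (f.symm one').2
  obtain ⟨r', s', hrs'⟩ := (f.symm tθ').2
  have hL : L = (p : ℝ) + q * θ' := hpq
  have hLθ : L * θ = (r : ℝ) + s * θ' := by
    have h := hlin tθ
    have h2 : (tθ : ℝ) = θ := rfl
    rw [h2] at h
    rw [← h]; exact hrs
  have hinvL : L⁻¹ = (p' : ℝ) + q' * θ := by
    have h := hsym one'
    have h2 : (one' : ℝ) = 1 := rfl
    rw [h2, mul_one] at h
    rw [← h]; exact hpq'
  have hinvθ' : L⁻¹ * θ' = (r' : ℝ) + s' * θ := by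
    have h := hsym tθ'
    have h2 : (tθ' : ℝ) = θ' := rfl
    rw [h2] at h
    rw [← h]; exact hrs'
  have e1R : ((p * p' + q * r' : ℤ) : ℝ) + ((p * q' + q * s' : ℤ) : ℝ) * θ =
      ((1 : ℤ) : ℝ) + ((0 : ℤ) : ℝ) * θ := by
    push_cast
    linear_combination inv_mul_cancel₀ hL0 - L⁻¹ * hL - (p : ℝ) * hinvL - (q : ℝ) * hinvθ'
  have e2R : ((r * p' + s * r' : ℤ) : ℝ) + ((r * q' + s * s' : ℤ) : ℝ) * θ =
      ((0 : ℤ) : ℝ) + ((1 : ℤ) : ℝ) * θ := by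
    push_cast
    linear_combination θ * inv_mul_cancel₀ hL0 - L⁻¹ * hLθ - (r : ℝ) * hinvL - (s : ℝ) * hinvθ'
  obtain ⟨ha1, ha2⟩ := Gsub_unique hθ e1R
  obtain ⟨hb1, hb2⟩ := Gsub_unique hθ e2R
  have h5 : (p * s - q * r) * (p' * s' - q' * r') = 1 := by
    have : (p * s - q * r) * (p' * s' - q' * r') =
        (p * p' + q * r') * (r * q' + s * s') - (p * q' + q * s') * (r * p' + s * r') := by
      ring
    rw [ha1, ha2, hb1, hb2] at this
    simpa using this
  have hdet2 : p * s - q * r = 1 ∨ p * s - q * r = -1 :=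
    Int.isUnit_iff.mp (IsUnit.of_mul_eq_one _ h5)
  have hden : (s : ℝ) - q * θ ≠ 0 := by
    intro h0
    by_cases hq0 : q = 0
    · rw [hq0] at h0
      simp at h0
      have hs0 : s = 0 := by exact_mod_cast h0
      rcases hdet2 with h | h <;> rw [hq0, hs0] at h <;> simp at h
    · have hqR : (q : ℝ) ≠ 0 := Int.cast_ne_zero.mpr hq0
      have : θ = ((s : ℤ) : ℝ) / ((q : ℤ) : ℝ) := by
        rw [eq_div_iff hqR]; linarith
      apply hθ
      exact ⟨((s : ℤ) : ℚ) / ((q : ℤ) : ℚ), by push_cast [this]; ring⟩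
  have hfinal : θ' = ((p : ℝ) * θ - r) / ((s : ℝ) - q * θ) := by
    rw [eq_div_iff hden]
    linear_combination θ * hL - hLθ
  refine ⟨p, -r, -q, s, ?_, ?_⟩
  · rcases hdet2 with h | h
    · left; linarith
    · right; linarith
  · rw [hfinal]
    push_cast
    congr 1 <;> ring

/-- For irrationals `θ`, `θ'`, there is an order-preserving additive group isomorphism
`G_θ ≃ G_{θ'}` (with the orders induced by `ℝ`) if and only if `θ` and `θ'` are
conjugate under the fractional action of `GL(2, ℤ)`, i.e. `θ' = (a·θ + b)/(c·θ + d)`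
for some integers with `a·d − b·c = ±1`. -/
theorem G_theta_ordered_classification (θ θ' : ℝ)
    (hθ : Irrational θ) (hθ' : Irrational θ') :
    (∃ f : Gsub θ ≃+ Gsub θ', Monotone f) ↔
    (∃ a b c d : ℤ, (a * d - b * c = 1 ∨ a * d - b * c = -1) ∧
      θ' = (a * θ + b) / (c * θ + d)) := by
  constructor
  · rintro ⟨f, hf⟩
    exact hard_dir hθ f hf
  · rintro ⟨a, b, c, d, hdet, heq⟩
    exact easy_dir hθ a b c d hdet heq
end
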